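/- For every integer n, every z ∈ ℂ and every z̲ ∈ ℤ, the lens theta functions satisfy the quasi-periodicity relations θ_τ(z+rnτ, z̲) = θ_τ(z, z̲)·e^{−nπi(2z+τ(rn−1)+1)} and θ_σ(z+rnσ, z̲) = θ_σ(z, z̲)·e^{−nπi(2z+σ(rn−1)+1)}. -/

import Mathlib

open Complex

noncomputable section

/-- `π` as a complex number. -/
def cπ : ℂ := Real.pi

/-- The infinite q-Pochhammer symbol `(w;q)_∞ = ∏_{j=0}^∞ (1 - w q^j)`. -/
def pochinf (w q : ℂ) : ℂ := ∏' j : ℕ, (1 - w * q ^ j)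

/-- The theta function `θ(w|q) = (w;q)_∞ (q w⁻¹;q)_∞`. -/
def jtheta (w q : ℂ) : ℂ := pochinf w q * pochinf (q * w⁻¹) q

/-- `e^{2πi x}`. -/
def e2pi (x : ℂ) : ℂ := Complex.exp (2 * cπ * Complex.I * x)

/-- Normalisation `φ_τ` for the lens theta function `θ_τ`. -/
def phiTau (r : ℕ) (σ τ z zb : ℂ) : ℂ :=
  cπ * Complex.I / (6 * (r : ℂ)) *
    (3 * ((r : ℂ) + 1 - 2 * zb) * (2 * z + 1) - ((r : ℂ) ^ 2 - 1) * (σ - τ - 1) -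
      6 * zb * ((r : ℂ) - zb) * (τ + 1))

/-- Normalisation `φ_σ` for the lens theta function `θ_σ`. -/
def phiSigma (r : ℕ) (σ τ z zb : ℂ) : ℂ :=
  -(cπ * Complex.I / (6 * (r : ℂ))) *
    (3 * ((r : ℂ) - 1 - 2 * zb) * (2 * z - 1) - ((r : ℂ) ^ 2 - 1) * (σ - τ - 1) +
      6 * zb * ((r : ℂ) - zb) * (σ - 1))

/-- The lens theta function `θ_τ(z,z̲)`. -/
def thetaTau (r : ℕ) (σ τ z zb : ℂ) : ℂ :=
  Complex.exp (phiTau r σ τ z zb) * jtheta (e2pi (-z) * e2pi (τ * zb)) (e2pi (τ * (r : ℂ)))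

/-- The lens theta function `θ_σ(z,z̲)`. -/
def thetaSigma (r : ℕ) (σ τ z zb : ℂ) : ℂ :=
  Complex.exp (phiSigma r σ τ z zb) * jtheta (e2pi z * e2pi (σ * zb)) (e2pi (σ * (r : ℂ)))

/-- The infinite-product factor `γ_σ(z,z̲)` of the lens elliptic gamma function. -/
def gammaSigmaF (r : ℕ) (σ τ z zb : ℂ) : ℂ :=
  ∏' p : ℕ × ℕ,
    (1 - e2pi (-z) * e2pi (-(σ * zb)) * e2pi ((σ + τ) * ((p.1 : ℂ) + 1)) *
        e2pi (σ * (r : ℂ) * ((p.2 : ℂ) + 1))) /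
    (1 - e2pi z * e2pi (σ * zb) * e2pi ((σ + τ) * (p.1 : ℂ)) * e2pi (σ * (r : ℂ) * (p.2 : ℂ)))

/-- The infinite-product factor `γ_τ(z,z̲)` of the lens elliptic gamma function. -/
def gammaTauF (r : ℕ) (σ τ z zb : ℂ) : ℂ :=
  ∏' p : ℕ × ℕ,
    (1 - e2pi (-z) * e2pi (-(τ * ((r : ℂ) - zb))) * e2pi ((σ + τ) * ((p.1 : ℂ) + 1)) *
        e2pi (τ * (r : ℂ) * ((p.2 : ℂ) + 1))) /
    (1 - e2pi z * e2pi (τ * ((r : ℂ) - zb)) * e2pi ((σ + τ) * (p.1 : ℂ)) *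
        e2pi (τ * (r : ℂ) * (p.2 : ℂ)))

/-- Normalisation `φ_e` of the lens elliptic gamma function. -/
def phiE (r : ℕ) (σ τ z zb : ℂ) : ℂ :=
  cπ * Complex.I *
    (zb * (zb - (r : ℂ)) * (6 * z - 3 * σ - 3 * τ + (1 - σ + τ) * ((r : ℂ) - 2 * zb))) /
    (6 * (r : ℂ))

/-- The lens elliptic gamma function `Γ(z,z̲)`. -/
def lensGamma (r : ℕ) (σ τ z zb : ℂ) : ℂ :=
  Complex.exp (phiE r σ τ z zb) * gammaSigmaF r σ τ z zb * gammaTauF r σ τ z zb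

/-- The triple infinite product `g_σ(z,z̲;σ,τ,ω)`. -/
def gS (r : ℕ) (σ τ ω z zb : ℂ) : ℂ :=
  ∏' k : ℕ × ℕ × ℕ,
    (1 - e2pi z * e2pi (σ * zb) * e2pi (σ * (r : ℂ) * (k.1 : ℂ)) *
        e2pi ((σ + τ) * (k.2.1 : ℂ)) * e2pi ((σ + ω) * (k.2.2 : ℂ)))

/-- The triple infinite product `g_τ(z,z̲;σ,τ,ω)`. -/
def gT (r : ℕ) (σ τ ω z zb : ℂ) : ℂ :=
  ∏' k : ℕ × ℕ × ℕ,
    (1 - e2pi z * e2pi (τ * ((r : ℂ) - zb)) * e2pi (τ * (r : ℂ) * (k.1 : ℂ)) *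
        e2pi ((σ + τ) * (k.2.1 : ℂ)) * e2pi (ω * (k.2.2 : ℂ)))

/-- `γ⁺_σ(z,z̲;σ,τ,ω)`. -/
def gammaPlusSigma (r : ℕ) (σ τ ω z zb : ℂ) : ℂ :=
  gS r σ τ ω z zb * gS r σ τ ω (σ + τ + ω - z) ((r : ℂ) + 1 - zb)

/-- `γ⁺_τ(z,z̲;σ,τ,ω)`. -/
def gammaPlusTau (r : ℕ) (σ τ ω z zb : ℂ) : ℂ :=
  gT r σ τ ω z zb * gT r σ τ ω (σ + τ + ω - z) ((r : ℂ) - zb)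

/-- The multiple Bernoulli polynomial `B_{3,3}(z;ω₁,ω₂,ω₃)`. -/
def B33 (z w1 w2 w3 : ℂ) : ℂ :=
  z ^ 3 / (w1 * w2 * w3) - 3 * z ^ 2 * (w1 + w2 + w3) / (2 * (w1 * w2 * w3)) +
    z * ((w1 ^ 2 + w2 ^ 2 + w3 ^ 2) + 3 * (w1 * w2 + w1 * w3 + w2 * w3)) /
      (2 * (w1 * w2 * w3)) -
    (w1 + w2 + w3) * (w1 * w2 + w1 * w3 + w2 * w3) / (4 * (w1 * w2 * w3))

/-- The multiple Bernoulli polynomial `B_{4,4}(z;ω₁,ω₂,ω₃,ω₄)`. -/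
def B44 (z w1 w2 w3 w4 : ℂ) : ℂ :=
  z ^ 4 / (w1 * w2 * w3 * w4) -
    2 * z ^ 3 * (w1 + w2 + w3 + w4) / (w1 * w2 * w3 * w4) +
    z ^ 2 * ((w1 ^ 2 + w2 ^ 2 + w3 ^ 2 + w4 ^ 2) +
        3 * (w1 * w2 + w1 * w3 + w1 * w4 + w2 * w3 + w2 * w4 + w3 * w4)) /
      (w1 * w2 * w3 * w4) -
    z * (w1 + w2 + w3 + w4) *
        (w1 * w2 + w1 * w3 + w1 * w4 + w2 * w3 + w2 * w4 + w3 * w4) /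
      (w1 * w2 * w3 * w4) -
    ((w1 ^ 4 + w2 ^ 4 + w3 ^ 4 + w4 ^ 4) -
        5 * ((w1 * w2) ^ 2 + (w1 * w3) ^ 2 + (w1 * w4) ^ 2 + (w2 * w3) ^ 2 + (w2 * w4) ^ 2 +
            (w3 * w4) ^ 2) -
        15 * (w1 ^ 2 * (w2 * w3 + w2 * w4 + w3 * w4) + w2 ^ 2 * (w1 * w3 + w1 * w4 + w3 * w4) +
            w3 ^ 2 * (w1 * w2 + w1 * w4 + w2 * w4) + w4 ^ 2 * (w1 * w2 + w1 * w3 + w2 * w3)) -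
        45 * (w1 * w2 * w3 * w4)) /
      (30 * (w1 * w2 * w3 * w4))

/-- `S(z;σ,τ,ω) = (B_{4,4}(z;σ,τ,−1,ω) + B_{4,4}(z−1;σ,τ,−1,ω))/48`. -/
def Sfun (z a b c : ℂ) : ℂ := (B44 z a b (-1) c + B44 (z - 1) a b (-1) c) / 48

/-- `S₂(z,z̲;σ,τ,ω)`. -/
def S2 (r : ℕ) (σ τ ω z zb : ℂ) : ℂ :=
  Sfun (z + zb * σ) ((r : ℂ) * σ) (σ + τ) (ω + σ) +
    Sfun (z + ((r : ℂ) - zb) * τ) ((r : ℂ) * τ) (σ + τ) (ω - τ)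

/-- `T₂(z,z̲;σ,τ,ω)`. -/
def T2 (r : ℕ) (σ τ ω z zb : ℂ) : ℂ :=
  Sfun (z + zb * σ) ((r : ℂ) * σ) (σ + τ) ω +
    Sfun (z + ((r : ℂ) - zb) * τ) ((r : ℂ) * τ) (σ + τ) ω

/-- Normalisation `φ⁺(z,z̲;σ,τ,ω)` of the lens triple gamma function. -/
def phiPlus (r : ℕ) (σ τ ω z zb : ℂ) : ℂ :=
  2 * cπ * Complex.I *
    (T2 r (σ - 1 / 2) (τ + 1 / 2) ω z 0 - S2 r (σ - 1 / 2) (τ + 1 / 2) ω z zb)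

/-- The lens triple gamma function `Γ⁺_σ(z,z̲;σ,τ,ω)`. -/
def GammaPlusSigma (r : ℕ) (σ τ ω z zb : ℂ) : ℂ :=
  Complex.exp (phiPlus r σ τ ω z zb) * gammaPlusSigma r σ τ ω z zb

/-- The lens triple gamma function `Γ⁺_{στ}(z,z̲;σ,τ,ω,μ)`. -/
def GammaPlusSigmaTau (r : ℕ) (σ τ ω μ z zb : ℂ) : ℂ :=
  GammaPlusSigma r σ τ ω z zb * gammaPlusTau r σ τ μ z zb

/-- The prefactor `λ(σ,τ)`. -/
def lam (r : ℕ) (σ τ : ℂ) : ℂ :=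
  pochinf (e2pi ((r : ℂ) * σ)) (e2pi ((r : ℂ) * σ)) *
    pochinf (e2pi ((r : ℂ) * τ)) (e2pi ((r : ℂ) * τ))

/-- The shifted discrete summation variable `z̃`. -/
def zt (r : ℕ) (xb : Fin 8 → ℚ) (zb : ℕ) : ℚ :=
  (zb : ℚ) + ((r : ℚ) + (((r + 1) % 2 : ℕ) : ℚ)) * Int.fract (xb 1)

/-- The elliptic hypergeometric sum/integral `I(x,x̲)`. -/
def Ihyp (r : ℕ) (σ τ : ℂ) (x : Fin 8 → ℂ) (xb : Fin 8 → ℚ) : ℂ :=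
  lam r σ τ / 2 *
    ∑ zb ∈ Finset.range r, ∫ z in (0:ℝ)..(1:ℝ),
      (∏ j : Fin 8,
          lensGamma r σ τ (x j + (z : ℂ)) ((xb j + zt r xb zb : ℚ) : ℂ) *
            lensGamma r σ τ (x j - (z : ℂ)) ((xb j - zt r xb zb : ℚ) : ℂ)) /
      (lensGamma r σ τ (2 * (z : ℂ)) ((2 * zt r xb zb : ℚ) : ℂ) *
        lensGamma r σ τ (-(2 * (z : ℂ))) ((-(2 * zt r xb zb) : ℚ) : ℂ))

/-- The shifted theta product `θ_σ(x,x̲)_k = ∏_{j=0}^{k−1} θ_σ(x+jτ, x̲+j)`. -/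
def thetaK (r : ℕ) (σ τ x xb : ℂ) (k : ℕ) : ℂ :=
  ∏ j ∈ Finset.range k, thetaSigma r σ τ (x + (j : ℂ) * τ) (xb + (j : ℂ))

end

/-!
Peeling the first factor off both q-Pochhammer symbols gives `θ(q w | q) = -w⁻¹ θ(w | q)`.
Shifting `z` by `rσ` multiplies the argument of the theta factor of `θ_σ` by its nome
`q = e^{2πiσr}` (for `θ_τ`, shifting by `rτ` divides it by its nome), while the normalisation `φ`
changes by a term linear in `z̲`; that term cancels the `z̲`-dependence of `-w⁻¹`, leaving the
multiplier `e^{-πi(2z + σ(r-1) + 1)}` (likewise for `τ`). Iterating this one-step relation in both directions gives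
the statement for every integer `n`.
-/

section JacobiTheta

variable {q : ℂ}

lemma multipliable_one_sub_mul_pow (w : ℂ) (hq : ‖q‖ < 1) :
    Multipliable fun j : ℕ => 1 - w * q ^ j := by
  simpa [sub_eq_add_neg] using multipliable_one_add_of_summable (f := fun j => -(w * q ^ j))
    (by simpa using (summable_geometric_of_lt_one (norm_nonneg q) hq).mul_left ‖w‖)

lemma pochinf_eq_one_sub_mul (w : ℂ) (hq : ‖q‖ < 1) :
    pochinf w q = (1 - w) * pochinf (w * q) q := by
  have hm : Multipliable fun j : ℕ => 1 - w * q ^ (j + 1) :=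
    (multipliable_one_sub_mul_pow (w * q) hq).congr fun j => by ring
  rw [pochinf, tprod_eq_zero_mul' (f := fun j => 1 - w * q ^ j) hm, pow_zero, mul_one, pochinf]
  exact congrArg _ (tprod_congr fun j => by ring)

lemma jtheta_mul_left {w : ℂ} (hq : ‖q‖ < 1) (hq0 : q ≠ 0) (hw : w ≠ 0) :
    jtheta (q * w) q = -w⁻¹ * jtheta w q := by
  have hinv : q * (q * w)⁻¹ = w⁻¹ := by field_simp
  have hone : (1 : ℂ) - w⁻¹ = -w⁻¹ * (1 - w) := by field_simp; ring
  rw [jtheta, hinv, jtheta, mul_comm q w, pochinf_eq_one_sub_mul w hq,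
    pochinf_eq_one_sub_mul w⁻¹ hq, hone, mul_comm w⁻¹ q]
  ring

lemma jtheta_inv_mul {w : ℂ} (hq : ‖q‖ < 1) (hq0 : q ≠ 0) (hw : w ≠ 0) :
    jtheta (q⁻¹ * w) q = -(q⁻¹ * w) * jtheta w q := by
  have hqw : q⁻¹ * w ≠ 0 := mul_ne_zero (inv_ne_zero hq0) hw
  have h := jtheta_mul_left hq hq0 hqw
  rw [mul_inv_cancel_left₀ hq0] at h
  rw [h]
  field_simp

end JacobiTheta

lemma e2pi_add (x y : ℂ) : e2pi (x + y) = e2pi x * e2pi y := by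
  rw [e2pi, e2pi, e2pi, mul_add, exp_add]

lemma e2pi_neg (x : ℂ) : e2pi (-x) = (e2pi x)⁻¹ := by
  rw [e2pi, e2pi, mul_neg, exp_neg]

lemma e2pi_ne_zero (x : ℂ) : e2pi x ≠ 0 := exp_ne_zero _

lemma norm_e2pi_lt_one {x : ℂ} (hx : 0 < x.im) : ‖e2pi x‖ < 1 := by
  rw [e2pi, norm_exp, Real.exp_lt_one_iff]
  have := mul_pos Real.pi_pos hx
  simp [cπ, mul_re, mul_im]
  linarith

lemma exp_add_cπ_mul_I (x : ℂ) : exp (x + cπ * I) = -exp x := exp_antiperiodic x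

lemma exp_add_two_cπ_mul_I (x : ℂ) : exp (x + 2 * cπ * I) = exp x := exp_periodic x

lemma quasiperiodic_int_mul {f : ℂ → ℂ} {p a : ℂ}
    (h : ∀ z, f (z + p) = f z * exp (-(2 * z + p + a) * (cπ * I))) (n : ℤ) (z : ℂ) :
    f (z + n * p) = f z * exp (-n * (2 * z + n * p + a) * (cπ * I)) := by
  induction n using Int.induction_on generalizing z with
  | zero => simp
  | succ i ih =>
    rw [show z + ((i + 1 : ℤ) : ℂ) * p = (z + p) + ((i : ℤ) : ℂ) * p by push_cast; ring, ih, h,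
      mul_assoc, ← exp_add]
    congr 2
    push_cast
    ring
  | pred i ih =>
    have hback : f (z - p) = f z * exp ((2 * (z - p) + p + a) * (cπ * I)) := by
      have h' := h (z - p)
      rw [sub_add_cancel] at h'
      rw [h', mul_assoc, ← exp_add, show -(2 * (z - p) + p + a) * (cπ * I) +
        (2 * (z - p) + p + a) * (cπ * I) = 0 by ring, exp_zero, mul_one]
    rw [show z + ((-i - 1 : ℤ) : ℂ) * p = (z - p) + ((-i : ℤ) : ℂ) * p by push_cast; ring, ih,
      hback, mul_assoc, ← exp_add]
    congr 2
    push_cast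
    ring

section LensTheta

variable {r : ℕ} {σ τ : ℂ}

lemma phiSigma_add_mul_self (hr : r ≠ 0) (z zb : ℂ) :
    phiSigma r σ τ (z + r * σ) zb = phiSigma r σ τ z zb - cπ * I * σ * (r - 1 - 2 * zb) := by
  simp only [phiSigma]
  field_simp
  ring

lemma phiTau_add_mul_self (hr : r ≠ 0) (z zb : ℂ) :
    phiTau r σ τ (z + r * τ) zb = phiTau r σ τ z zb + cπ * I * τ * (r + 1 - 2 * zb) := by
  simp only [phiTau]
  field_simp
  ring

lemma thetaSigma_add_period (hr : 0 < r) (hσ : 0 < σ.im) (z zb : ℂ) :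
    thetaSigma r σ τ (z + r * σ) zb =
      thetaSigma r σ τ z zb * exp (-(2 * z + r * σ + (1 - σ)) * (cπ * I)) := by
  set q := e2pi (σ * r)
  set w := e2pi z * e2pi (σ * zb)
  have hq : ‖q‖ < 1 := norm_e2pi_lt_one (by simpa using mul_pos hσ (Nat.cast_pos.2 hr))
  have hw : w = e2pi (z + σ * zb) := (e2pi_add z _).symm
  have hshift : e2pi (z + r * σ) * e2pi (σ * zb) = q * w := by
    rw [e2pi_add, mul_comm (r : ℂ) σ]; ring
  have hfactor : exp (phiSigma r σ τ (z + r * σ) zb) * -w⁻¹ =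
      exp (phiSigma r σ τ z zb) * exp (-(2 * z + r * σ + (1 - σ)) * (cπ * I)) := by
    rw [hw, ← e2pi_neg, e2pi, ← exp_add_cπ_mul_I, ← exp_add, ← exp_add,
      phiSigma_add_mul_self hr.ne']
    conv_rhs => rw [← exp_add_two_cπ_mul_I]
    ring_nf
  rw [thetaSigma, thetaSigma, hshift, jtheta_mul_left hq (e2pi_ne_zero _) (hw ▸ e2pi_ne_zero _),
    ← mul_assoc, hfactor]
  ring

lemma thetaTau_add_period (hr : 0 < r) (hτ : 0 < τ.im) (z zb : ℂ) :
    thetaTau r σ τ (z + r * τ) zb =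
      thetaTau r σ τ z zb * exp (-(2 * z + r * τ + (1 - τ)) * (cπ * I)) := by
  set q := e2pi (τ * r)
  set w := e2pi (-z) * e2pi (τ * zb)
  have hq : ‖q‖ < 1 := norm_e2pi_lt_one (by simpa using mul_pos hτ (Nat.cast_pos.2 hr))
  have hshift : e2pi (-(z + r * τ)) * e2pi (τ * zb) = q⁻¹ * w := by
    rw [neg_add, e2pi_add, ← e2pi_neg, mul_comm (r : ℂ) τ]; ring
  have hqw : q⁻¹ * w = e2pi (-(τ * r) - z + τ * zb) := by
    rw [sub_eq_add_neg, e2pi_add, e2pi_add, e2pi_neg, mul_assoc]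
  have hfactor : exp (phiTau r σ τ (z + r * τ) zb) * -(q⁻¹ * w) =
      exp (phiTau r σ τ z zb) * exp (-(2 * z + r * τ + (1 - τ)) * (cπ * I)) := by
    rw [hqw, e2pi, ← exp_add_cπ_mul_I, ← exp_add, ← exp_add, phiTau_add_mul_self hr.ne']
    conv_rhs => rw [← exp_add_two_cπ_mul_I]
    ring_nf
  rw [thetaTau, thetaTau, hshift, jtheta_inv_mul hq (e2pi_ne_zero _)
    (mul_ne_zero (e2pi_ne_zero _) (e2pi_ne_zero _)), ← mul_assoc, hfactor]
  ring

end LensTheta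

/-- quasi-periodicity of the lens theta functions. -/
theorem lens_theta_quasi_periodicity (r : ℕ) (hr : 0 < r) (σ τ : ℂ)
    (hσ : 0 < σ.im) (hτ : 0 < τ.im) (n : ℤ) (z : ℂ) (zb : ℤ) :
    thetaTau r σ τ (z + (r : ℂ) * (n : ℂ) * τ) (zb : ℂ) =
      thetaTau r σ τ z (zb : ℂ) *
        Complex.exp (-(n : ℂ) * cπ * Complex.I *
          (2 * z + τ * ((r : ℂ) * (n : ℂ) - 1) + 1)) ∧
    thetaSigma r σ τ (z + (r : ℂ) * (n : ℂ) * σ) (zb : ℂ) =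
      thetaSigma r σ τ z (zb : ℂ) *
        Complex.exp (-(n : ℂ) * cπ * Complex.I *
          (2 * z + σ * ((r : ℂ) * (n : ℂ) - 1) + 1)) := by
  constructor
  · convert quasiperiodic_int_mul (f := (thetaTau r σ τ · zb)) (thetaTau_add_period hr hτ · zb) n z
      using 3 <;> ring
  · convert quasiperiodic_int_mul (f := (thetaSigma r σ τ · zb)) (thetaSigma_add_period hr hσ · zb)
      n z using 3 <;> ring
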